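/- arXiv:1906.02633 — 2 statements merged into one kernel-verified Lean document; each statement's English description precedes it below -/
import Mathlib

section
/- For every path P ∈ 𝒫, the path operator d_P : Λ → Λ is the operator of multiplication by the symmetric function d_P(1): for every F ∈ Λ, d_P(F) = d_P(1) · F. -/
open scoped Classical

noncomputable section

/-- The base field `K = ℚ(q)` of rational functions in `q` over `ℚ`. -/
abbrev K : Type := RatFunc ℚ

/-- The variable `q`. -/
def q : K := RatFunc.X

/-- The ring of symmetric functions `Λ`, realized as the polynomial ring over `K`
on the power sum generators `p r`, `r ≥ 1`. -/
abbrev SF : Type := MvPolynomial ℕ+ K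

/-- The power sum generator `p r`. -/
def p (r : ℕ+) : SF := MvPolynomial.X r

/-- The elementary symmetric functions, determined by the generating function
`∑ e_m z^m = exp (∑_{r ≥ 1} (-1)^(r-1) p_r z^r / r)`, equivalently (char. 0) by `e_0 = 1` and
Newton's recursion `(m+1) e_{m+1} = ∑_{j=0}^{m} (-1)^j p_{j+1} e_{m-j}`. -/
def e : ℕ → SF
  | 0 => 1
  | (m+1) =>
      (((m : K) + 1)⁻¹) •
        ∑ r ∈ Finset.range (m+1), ((-1 : SF))^r * p ⟨r+1, Nat.succ_pos r⟩ * e (m - r)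
  termination_by m => m
  decreasing_by exact Nat.lt_succ_of_le (Nat.sub_le _ _)

/-- `V k = Λ[y_1, …, y_k]`. -/
abbrev V (k : ℕ) : Type := MvPolynomial (Fin k) SF

/-- `q` as an element of `V k`. -/
def qV (k : ℕ) : V k := algebraMap K (V k) q

/-- The variable `y i` of `V k` (1-based: meaningful for `1 ≤ i ≤ k`). -/
def Y (k i : ℕ) : V k := if h : i - 1 < k then MvPolynomial.X ⟨i - 1, h⟩ else 0

/-- The operator exchanging the variables `y i` and `y (i+1)` (meaningful for `1 ≤ i ≤ k-1`). -/
def swapVar (k i : ℕ) : V k → V k := fun P =>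
  if h : i - 1 < k ∧ i < k then
    MvPolynomial.rename (Equiv.swap (⟨i - 1, h.1⟩ : Fin k) (⟨i, h.2⟩ : Fin k)) P
  else P

/-- `Trel T` says that, for each `k` and each `1 ≤ i ≤ k-1`, the operator `T k i : V k → V k`
is the Dyck path algebra operator `T_i`, characterized by
`(y_{i+1} - y_i) * T_i P = (q-1) y_{i+1} P + (y_{i+1} - q y_i) * (s_i P)`
(this determines `T k i` uniquely since `V k` is an integral domain). -/
def Trel (T : ∀ k : ℕ, ℕ → V k → V k) : Prop :=
  ∀ k i, 1 ≤ i → i + 1 ≤ k → ∀ P : V k,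
    (Y k (i+1) - Y k i) * T k i P
      = (qV k - 1) * Y k (i+1) * P + (Y k (i+1) - qV k * Y k i) * swapVar k i P

/-- `Tchain T m n = T_1 ∘ T_2 ∘ ⋯ ∘ T_n` on `V m` (the rightmost factor applied first). -/
def Tchain (T : ∀ k : ℕ, ℕ → V k → V k) (m : ℕ) : ℕ → V m → V m
  | 0 => fun F => F
  | (n+1) => fun F => Tchain T m n (T m (n+1) F)

/-- The coefficient map `Λ → V (k+1)` of the plethystic substitution `p_r ↦ p_r + (q-1) y_{k+1}^r`. -/
def plethAddC (k : ℕ) : SF →+* V (k+1) :=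
  MvPolynomial.eval₂Hom (algebraMap K (V (k+1)))
    (fun r => MvPolynomial.C (p r) + (qV (k+1) - 1) * (Y (k+1) (k+1))^(r : ℕ))

/-- The plethystic substitution `V k → V (k+1)`, `F ↦ F[X + (q-1) y_{k+1}]`,
fixing the variables `y_1, …, y_k` and sending `p_r ↦ p_r + (q-1) y_{k+1}^r`. -/
def raiseAdd (k : ℕ) : V k →+* V (k+1) :=
  MvPolynomial.eval₂Hom (plethAddC k) (fun j => MvPolynomial.X (Fin.castSucc j))

/-- The operator `d_+ : V k → V (k+1)`, `d_+ F = T_1 T_2 ⋯ T_k (F[X + (q-1) y_{k+1}])`. -/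
def dPlus (T : ∀ k : ℕ, ℕ → V k → V k) (k : ℕ) (F : V k) : V (k+1) :=
  Tchain T (k+1) k (raiseAdd k F)

/-- The coefficient map `Λ → V (k+1)` of the plethystic substitution `p_r ↦ p_r - (q-1) y_{k+1}^r`. -/
def plethSubC (k : ℕ) : SF →+* V (k+1) :=
  MvPolynomial.eval₂Hom (algebraMap K (V (k+1)))
    (fun r => MvPolynomial.C (p r) - (qV (k+1) - 1) * (Y (k+1) (k+1))^(r : ℕ))

/-- The plethystic substitution `V (k+1) → V (k+1)`, `F ↦ F[X - (q-1) y_{k+1}]`. -/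
def plethSub (k : ℕ) : V (k+1) →+* V (k+1) :=
  MvPolynomial.eval₂Hom (plethSubC k) (fun j => MvPolynomial.X j)

/-- Expansion of an element of `V (k+1)` as a polynomial in the last variable `y_{k+1}`
with coefficients in `V k`. -/
def toPolyLast (k : ℕ) : V (k+1) ≃ₐ[SF] Polynomial (V k) :=
  (MvPolynomial.renameEquiv SF finSuccEquivLast).trans (MvPolynomial.optionEquivLeft SF (Fin k))

/-- The operator `d_- : V (k+1) → V k`:  writing `F[X - (q-1) y_{k+1}] = ∑_j F_j y_{k+1}^j`
with `F_j ∈ V k`, set `d_- F = ∑_j (-1)^j F_j e_{j+1}`. -/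
def dMinus (k : ℕ) (F : V (k+1)) : V k :=
  ((toPolyLast k) (plethSub k F)).sum
    (fun j Fj => ((-1 : V k))^j * (MvPolynomial.C (e (j+1)) * Fj))

/-- `d_- : V k → V (k-1)` for every `k` (junk value `0` for `k = 0`). -/
def dMinus' : ∀ k : ℕ, V k → V (k - 1)
  | 0 => fun _ => 0
  | (k+1) => dMinus k

/-- The operator `φ = (d_- d_+ - d_+ d_-)/(q-1) : V (k+1) → V (k+1)`. -/
def phi (T : ∀ k : ℕ, ℕ → V k → V k) (k : ℕ) (F : V (k+1)) : V (k+1) :=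
  ((q - 1)⁻¹ : K) • (dMinus (k+1) (dPlus T (k+1) F) - dPlus T k (dMinus k F))

/-- `φ : V k → V k` for every `k` (junk value, the identity, for `k = 0`). -/
def phi' (T : ∀ k : ℕ, ℕ → V k → V k) : ∀ k : ℕ, V k → V k
  | 0 => fun F => F
  | (k+1) => phi T k


/-- The composite operator `Op T a s = d_- φ^{a 1} d_- φ^{a 2} ⋯ d_- φ^{a s} : V s → V 0`
(the rightmost factor applied first, each factor acting in the appropriate degree). -/
def Op (T : ∀ k : ℕ, ℕ → V k → V k) (a : ℕ → ℕ) : ∀ s : ℕ, V s → V 0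
  | 0 => fun F => F
  | (s+1) => fun F => Op T a s (dMinus s ((phi T s)^[a (s+1)] F))

/-- Steps of a Schröder path: north `(0,1)`, diagonal `(1,1)`, east `(1,0)`. -/
inductive PStep : Type
  | north : PStep
  | diag : PStep
  | east : PStep
  deriving DecidableEq

/-- A word in `{-, 0, +}` (read left to right) encodes a path in `𝒫` iff it ends on the
diagonal, stays weakly above it, and no diagonal step lies on the line `y = x`. -/
def IsPath (w : List PStep) : Prop :=
  (w.count PStep.east = w.count PStep.north) ∧
  (∀ n, (w.take n).count PStep.east ≤ (w.take n).count PStep.north) ∧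
  (∀ n < w.length, w.getD n PStep.east = PStep.diag →
      (w.take n).count PStep.east < (w.take n).count PStep.north)

/-- Applying the operator of a single step to an element of some `V k`. -/
def stepApply (T : ∀ k : ℕ, ℕ → V k → V k) : PStep → (Σ k : ℕ, V k) → (Σ k : ℕ, V k)
  | PStep.east, ⟨k, F⟩ => ⟨k+1, dPlus T k F⟩
  | PStep.north, ⟨k, F⟩ => ⟨k-1, dMinus' k F⟩
  | PStep.diag, ⟨k, F⟩ => ⟨k, phi' T k F⟩

/-- Running the word `w` (left to right composition, the operator of the last letter of `w`
applied first) on `F ∈ V 0`. -/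
def pathRun (T : ∀ k : ℕ, ℕ → V k → V k) (w : List PStep) (F : V 0) : Σ k : ℕ, V k :=
  w.foldr (stepApply T) ⟨0, F⟩

/-- The path operator `d_P : Λ → Λ` of the word `w`: each `-` becomes `d_-`, each `0`
becomes `φ`, each `+` becomes `d_+`.  (For a genuine path the run ends in degree `0`.) -/
def dPath (T : ∀ k : ℕ, ℕ → V k → V k) (w : List PStep) (F : V 0) : V 0 :=
  if h : (pathRun T w F).1 = 0 then cast (congrArg V h) (pathRun T w F).2 else 0


namespace DPathAux

open MvPolynomial

set_option maxHeartbeats 1000000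
set_option synthInstance.maxHeartbeats 1000000

variable {T : ∀ k : ℕ, ℕ → V k → V k}

/-- The twisted module structure `F ↦ F[X + (q-1)(y_1 + ⋯ + y_k)]`. -/
def rho (k : ℕ) : SF →+* V k :=
  eval₂Hom (algebraMap K (V k))
    (fun r => MvPolynomial.C (p r) + (qV k - 1) * ∑ i : Fin k, (MvPolynomial.X i) ^ (r : ℕ))

lemma rho_X (k : ℕ) (r : ℕ+) :
    rho k (MvPolynomial.X r)
      = MvPolynomial.C (p r) + (qV k - 1) * ∑ i : Fin k, (MvPolynomial.X i) ^ (r : ℕ) := by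
  simp [rho]

lemma rho_C (k : ℕ) (a : K) :
    rho k (MvPolynomial.C a) = MvPolynomial.C (MvPolynomial.C a) := by
  simp [rho, MvPolynomial.algebraMap_eq]

lemma rename_rho (k : ℕ) (σ : Equiv.Perm (Fin k)) (F : SF) :
    rename σ (rho k F) = rho k F := by
  have h : (rename (σ : Fin k → Fin k)).toRingHom.comp (rho k) = rho k := by
    apply MvPolynomial.ringHom_ext
    · intro a
      simp [rho_C, MvPolynomial.algebraMap_eq]
    · intro r
      simp only [RingHom.coe_comp, Function.comp_apply, AlgHom.toRingHom_eq_coe,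
        RingHom.coe_coe, rho_X]
      rw [map_add, map_mul, map_sub, map_one, map_sum]
      have hq : rename (σ : Fin k → Fin k) (qV k) = qV k := by
        simp [qV, MvPolynomial.algebraMap_eq]
      rw [hq, rename_C]
      congr 1
      congr 1
      rw [show (∑ i : Fin k, rename (σ : Fin k → Fin k) ((MvPolynomial.X i)^(r:ℕ)))
          = ∑ i : Fin k, (MvPolynomial.X (σ i) : V k)^(r:ℕ) by
        refine Finset.sum_congr rfl fun i _ => ?_
        rw [map_pow, rename_X]]
      exact Equiv.sum_comp σ (fun i => (MvPolynomial.X i : V k)^(r:ℕ))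
  exact RingHom.congr_fun h F

lemma Y_eq (k i : ℕ) (h : i - 1 < k) : Y k i = MvPolynomial.X (⟨i-1, h⟩ : Fin k) := by
  rw [Y, dif_pos h]

lemma T_mul (hT : Trel T) (k i : ℕ) (h1 : 1 ≤ i) (h2 : i + 1 ≤ k) (F : SF) (P : V k) :
    T k i (rho k F * P) = rho k F * T k i P := by
  have hi1 : i - 1 < k := by omega
  have hi2 : i < k := by omega
  have hswap : swapVar k i (rho k F * P) = rho k F * swapVar k i P := by
    rw [swapVar, swapVar, dif_pos ⟨hi1, hi2⟩, dif_pos ⟨hi1, hi2⟩, map_mul,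
      rename_rho k (Equiv.swap _ _) F]
  have hy : Y k (i+1) - Y k i ≠ 0 := by
    rw [Y_eq k (i+1) (by omega), Y_eq k i hi1]
    intro hc
    have h3 := MvPolynomial.X_injective (sub_eq_zero.mp hc)
    simp only [Fin.mk.injEq] at h3
    omega
  apply mul_left_cancel₀ hy
  rw [hT k i h1 h2, hswap,
    show (Y k (i+1) - Y k i) * (rho k F * T k i P)
      = rho k F * ((Y k (i+1) - Y k i) * T k i P) by ring,
    hT k i h1 h2 P]
  ring

lemma Tchain_mul (hT : Trel T) (k : ℕ) (F : SF) (n : ℕ) (hn : n ≤ k) (P : V (k+1)) :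
    Tchain T (k+1) n (rho (k+1) F * P) = rho (k+1) F * Tchain T (k+1) n P := by
  induction n generalizing P with
  | zero => rfl
  | succ n ih =>
    show Tchain T (k+1) n (T (k+1) (n+1) (rho (k+1) F * P))
        = rho (k+1) F * Tchain T (k+1) n (T (k+1) (n+1) P)
    rw [T_mul hT (k+1) (n+1) (by omega) (by omega), ih (by omega)]

lemma Y_last (k : ℕ) : Y (k+1) (k+1) = MvPolynomial.X (Fin.last k) := by
  rw [Y, dif_pos (by omega : k + 1 - 1 < k + 1)]
  rfl

lemma raiseAdd_rho (k : ℕ) (F : SF) : raiseAdd k (rho k F) = rho (k+1) F := by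
  have h : (raiseAdd k).comp (rho k) = rho (k+1) := by
    apply MvPolynomial.ringHom_ext
    · intro a
      simp [rho_C, raiseAdd, plethAddC, MvPolynomial.algebraMap_eq]
    · intro r
      simp only [RingHom.coe_comp, Function.comp_apply, rho_X]
      have hC : raiseAdd k (MvPolynomial.C (p r))
          = MvPolynomial.C (p r) + (qV (k+1) - 1) * (Y (k+1) (k+1))^(r:ℕ) := by
        simp [raiseAdd, plethAddC, p]
      have hq : raiseAdd k (qV k) = qV (k+1) := by
        simp [raiseAdd, plethAddC, qV, MvPolynomial.algebraMap_eq]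
      have hX : ∀ i : Fin k, raiseAdd k ((MvPolynomial.X i : V k)^(r:ℕ))
          = (MvPolynomial.X (Fin.castSucc i) : V (k+1))^(r:ℕ) := by
        intro i
        rw [map_pow]
        simp [raiseAdd]
      rw [map_add, map_mul, map_sub, map_one, map_sum, hC, hq]
      rw [Finset.sum_congr rfl fun i _ => hX i]
      rw [Fin.sum_univ_castSucc (f := fun i : Fin (k+1) => (MvPolynomial.X i : V (k+1))^(r:ℕ)),
        Y_last]
      ring
  exact RingHom.congr_fun h F

lemma plethSub_rho (k : ℕ) (F : SF) :
    plethSub k (rho (k+1) F) = rename (Fin.castSucc : Fin k → Fin (k+1)) (rho k F) := by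
  have h : (plethSub k).comp (rho (k+1))
      = (rename (Fin.castSucc : Fin k → Fin (k+1))).toRingHom.comp (rho k) := by
    apply MvPolynomial.ringHom_ext
    · intro a
      simp [rho_C, plethSub, plethSubC, MvPolynomial.algebraMap_eq]
    · intro r
      simp only [RingHom.coe_comp, Function.comp_apply, AlgHom.toRingHom_eq_coe,
        RingHom.coe_coe, rho_X]
      have hC : plethSub k (MvPolynomial.C (p r))
          = MvPolynomial.C (p r) - (qV (k+1) - 1) * (Y (k+1) (k+1))^(r:ℕ) := by
        simp [plethSub, plethSubC, p]
      have hq : plethSub k (qV (k+1)) = qV (k+1) := by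
        simp [plethSub, plethSubC, qV, MvPolynomial.algebraMap_eq]
      have hX : ∀ i : Fin (k+1), plethSub k ((MvPolynomial.X i : V (k+1))^(r:ℕ))
          = (MvPolynomial.X i : V (k+1))^(r:ℕ) := by
        intro i; rw [map_pow]; simp [plethSub]
      have hq' : rename (Fin.castSucc : Fin k → Fin (k+1)) (qV k) = qV (k+1) := by
        simp [qV, MvPolynomial.algebraMap_eq]
      rw [map_add, map_mul, map_sub, map_one, map_sum, hC, hq]
      rw [Finset.sum_congr rfl fun i _ => hX i]
      rw [map_add, map_mul, map_sub, map_one, map_sum, rename_C, hq']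
      rw [Finset.sum_congr rfl (fun i _ => by
        rw [map_pow, rename_X] :
        ∀ i ∈ Finset.univ, rename (Fin.castSucc : Fin k → Fin (k+1)) ((MvPolynomial.X i : V k)^(r:ℕ))
          = (MvPolynomial.X (Fin.castSucc i) : V (k+1))^(r:ℕ))]
      rw [Fin.sum_univ_castSucc (f := fun i : Fin (k+1) => (MvPolynomial.X i : V (k+1))^(r:ℕ)),
        Y_last]
      ring
  exact RingHom.congr_fun h F

lemma toPolyLast_rename (k : ℕ) (G : V k) :
    toPolyLast k (rename (Fin.castSucc : Fin k → Fin (k+1)) G) = Polynomial.C G := by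
  induction G using MvPolynomial.induction_on with
  | C a =>
      rw [rename_C]
      simp [toPolyLast, MvPolynomial.optionEquivLeft_C]
  | add f g hf hg => rw [map_add, map_add, hf, hg, map_add]
  | mul_X f i hf =>
      rw [map_mul, map_mul, hf, rename_X, map_mul]
      congr 1
      simp [toPolyLast, finSuccEquivLast_castSucc, MvPolynomial.optionEquivLeft_X_some]

lemma dMinus_mul (k : ℕ) (F : SF) (P : V (k+1)) :
    dMinus k (rho (k+1) F * P) = rho k F * dMinus k P := by
  rw [dMinus, dMinus, map_mul, plethSub_rho, map_mul, toPolyLast_rename]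
  generalize toPolyLast k (plethSub k P) = Q
  rw [← Polynomial.smul_eq_C_mul]
  rw [Polynomial.sum_def, Polynomial.sum_def, Finset.mul_sum]
  rw [Finset.sum_subset (Polynomial.support_smul _ _)]
  · refine Finset.sum_congr rfl fun j hj => ?_
    rw [Polynomial.coeff_smul, smul_eq_mul]
    ring
  · intro j hj hnj
    rw [Polynomial.notMem_support_iff.mp hnj]
    simp

lemma dPlus_mul (hT : Trel T) (k : ℕ) (F : SF) (P : V k) :
    dPlus T k (rho k F * P) = rho (k+1) F * dPlus T k P := by
  rw [dPlus, dPlus, map_mul, raiseAdd_rho, Tchain_mul hT k F k le_rfl]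

lemma phi_mul (hT : Trel T) (k : ℕ) (F : SF) (P : V (k+1)) :
    phi T k (rho (k+1) F * P) = rho (k+1) F * phi T k P := by
  rw [phi, phi, dPlus_mul hT, dMinus_mul, dMinus_mul, dPlus_mul hT, ← mul_sub]
  exact (mul_smul_comm _ _ _).symm

lemma phi'_mul (hT : Trel T) (k : ℕ) (F : SF) (P : V k) :
    phi' T k (rho k F * P) = rho k F * phi' T k P := by
  cases k with
  | zero => rfl
  | succ k => exact phi_mul hT k F P

lemma dMinus'_mul (k : ℕ) (F : SF) (P : V k) :
    dMinus' k (rho k F * P) = rho (k-1) F * dMinus' k P := by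
  cases k with
  | zero => simp [dMinus']
  | succ k => exact dMinus_mul k F P

/-- Multiplication by `rho _ F` on the total space. -/
def mulRho (F : SF) : (Σ k : ℕ, V k) → (Σ k : ℕ, V k) := fun x => ⟨x.1, rho x.1 F * x.2⟩

lemma stepApply_mulRho (hT : Trel T) (s : PStep) (F : SF) (x : Σ k : ℕ, V k) :
    stepApply T s (mulRho F x) = mulRho F (stepApply T s x) := by
  obtain ⟨k, P⟩ := x
  cases s with
  | east =>
      show (⟨k+1, dPlus T k (rho k F * P)⟩ : Σ k : ℕ, V k) = ⟨k+1, rho (k+1) F * dPlus T k P⟩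
      rw [dPlus_mul hT]
  | north =>
      show (⟨k-1, dMinus' k (rho k F * P)⟩ : Σ k : ℕ, V k) = ⟨k-1, rho (k-1) F * dMinus' k P⟩
      rw [dMinus'_mul]
  | diag =>
      show (⟨k, phi' T k (rho k F * P)⟩ : Σ k : ℕ, V k) = ⟨k, rho k F * phi' T k P⟩
      rw [phi'_mul hT]

lemma pathRun_mulRho (hT : Trel T) (w : List PStep) (F : SF) (G : V 0) :
    pathRun T w (rho 0 F * G) = mulRho F (pathRun T w G) := by
  induction w with
  | nil => rfl
  | cons s w ih =>
      show stepApply T s (pathRun T w (rho 0 F * G)) = mulRho F (stepApply T s (pathRun T w G))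
      rw [ih, stepApply_mulRho hT]

lemma dPath_aux (F : SF) (x : Σ k : ℕ, V k) :
    (if h : (mulRho F x).1 = 0 then cast (congrArg V h) (mulRho F x).2 else 0)
      = rho 0 F * (if h : x.1 = 0 then cast (congrArg V h) x.2 else 0) := by
  obtain ⟨k, P⟩ := x
  rw [show mulRho F ⟨k, P⟩ = ⟨k, rho k F * P⟩ from rfl]
  by_cases h : k = 0
  · subst h
    rw [dif_pos rfl, dif_pos rfl, cast_eq, cast_eq]
  · rw [dif_neg h, dif_neg h, mul_zero]

lemma dPath_mul (hT : Trel T) (w : List PStep) (F : SF) (G : V 0) :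
    dPath T w (rho 0 F * G) = rho 0 F * dPath T w G := by
  have hrun := pathRun_mulRho hT w F G
  calc dPath T w (rho 0 F * G)
      = (fun x : Σ k : ℕ, V k =>
          if h : x.1 = 0 then cast (congrArg V h) x.2 else 0) (pathRun T w (rho 0 F * G)) := rfl
    _ = rho 0 F * dPath T w G := by rw [hrun]; exact dPath_aux F (pathRun T w G)

lemma rho_zero (F : SF) : rho 0 F = MvPolynomial.C F := by
  have h : rho 0 = (MvPolynomial.C : SF →+* V 0) := by
    apply MvPolynomial.ringHom_ext
    · intro a
      rw [rho_C]
    · intro r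
      rw [rho_X]
      simp [p]
  rw [h]

end DPathAux


/-- For every path `P ∈ 𝒫` (encoded by the word `w`), the path operator
`d_P : Λ → Λ` is the operator of multiplication by `d_P(1)`. -/
theorem dPath_is_multiplication (T : ∀ k : ℕ, ℕ → V k → V k) (hT : Trel T)
    (w : List PStep) (hw : IsPath w) :
    ∀ F : V 0, dPath T w F = dPath T w 1 * F := by
  intro F
  obtain ⟨F', rfl⟩ := MvPolynomial.C_surjective (Fin 0) F
  rw [← DPathAux.rho_zero, show DPathAux.rho 0 F' = DPathAux.rho 0 F' * 1 from (mul_one _).symm,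
    DPathAux.dPath_mul hT, mul_one, mul_comm]


end
end

section
/- For any two paths P, Q ∈ 𝒫, the path operators commute: d_P ∘ d_Q = d_Q ∘ d_P as operators Λ → Λ. -/
open scoped Classical

noncomputable section

/-!
For `F ∈ Λ` write `F_k = F[X + (q-1)(y_1 + ⋯ + y_k)] ∈ V_k`. Each of `d_+`, `d_-`, `φ` satisfies
`d(A · F_k) = d(A) · F_{k'}` (`k'` the target degree). In `d_+` the substitution
`X ↦ X + (q-1) y_{k+1}` turns `F_k` into `F_{k+1}`, which is symmetric in the `y`'s and hence
passes through the Demazure–Lusztig operators `T_i`; in `d_-` the substitution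
`X ↦ X - (q-1) y_{k+1}` turns `F_{k+1}` into `F_k`, which does not involve `y_{k+1}` and hence
passes through the extraction of coefficients in `y_{k+1}`. Composing along a path gives
`d_P F = d_P(1) · F`, and multiplication operators commute.
-/

open MvPolynomial

/-- `F ↦ F[X + (q-1)(y_1 + ⋯ + y_k)]` on the coefficient ring `Λ`. -/
def plethLiftC (k : ℕ) : SF →+* V k :=
  eval₂Hom (algebraMap K (V k)) (fun r => C (p r) + (qV k - 1) * ∑ i : Fin k, X i ^ (r : ℕ))

def plethLift (k : ℕ) : V 0 →+* V k :=
  eval₂Hom (plethLiftC k) Fin.elim0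

lemma plethLift_C (k : ℕ) (s : SF) : plethLift k (C s) = plethLiftC k s := by
  simp [plethLift]

lemma plethLiftC_C (k : ℕ) (a : K) : plethLiftC k (C a) = C (C a) := by
  simp [plethLiftC, MvPolynomial.algebraMap_apply, algebraMap_eq]

lemma plethLiftC_X (k : ℕ) (r : ℕ+) :
    plethLiftC k (X r) = C (X r) + (qV k - 1) * ∑ i : Fin k, X i ^ (r : ℕ) := by
  simp [plethLiftC, p]

lemma plethLift_zero_apply (F : V 0) : plethLift 0 F = F := by
  obtain ⟨s, rfl⟩ := C_surjective (Fin 0) F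
  have : plethLiftC 0 = C := ringHom_ext (plethLiftC_C 0) fun r => by simp [plethLiftC_X]
  rw [plethLift_C, this]

lemma Y_last (k : ℕ) : Y (k+1) (k+1) = X (Fin.last k) := by
  rw [Y, dif_pos (by omega)]
  rfl

lemma raiseAdd_comp_plethLiftC (k : ℕ) :
    (raiseAdd k).comp (plethLiftC k) = plethLiftC (k+1) := by
  refine ringHom_ext (fun a => ?_) (fun r => ?_)
  · simp [plethLiftC_C, raiseAdd, plethAddC, MvPolynomial.algebraMap_apply, algebraMap_eq]
  · simp only [raiseAdd, plethAddC, p, qV, MvPolynomial.algebraMap_apply, algebraMap_eq, Y_last,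
      RingHom.coe_comp, coe_eval₂Hom, Function.comp_apply, plethLiftC_X, eval₂_add, eval₂_C,
      eval₂Hom_X', eval₂_mul, eval₂_sub, eval₂Hom_C, eval₂_one, eval₂_sum, eval₂_pow, eval₂_X,
      Fin.sum_univ_castSucc]
    ring

lemma raiseAdd_plethLift (k : ℕ) (F : V 0) : raiseAdd k (plethLift k F) = plethLift (k+1) F := by
  obtain ⟨s, rfl⟩ := C_surjective (Fin 0) F
  rw [plethLift_C, plethLift_C, ← raiseAdd_comp_plethLiftC, RingHom.comp_apply]

lemma plethSub_comp_plethLiftC (k : ℕ) :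
    (plethSub k).comp (plethLiftC (k+1)) = (rename Fin.castSucc).toRingHom.comp (plethLiftC k) := by
  refine ringHom_ext (fun a => ?_) (fun r => ?_)
  · simp [plethLiftC_C, plethSub, plethSubC, MvPolynomial.algebraMap_apply, algebraMap_eq]
  · simp only [plethSub, plethSubC, p, qV, MvPolynomial.algebraMap_apply, algebraMap_eq, Y_last,
      eval₂Hom_eq_bind₂, RingHom.coe_comp, Function.comp_apply, plethLiftC_X, Fin.sum_univ_castSucc,
      map_add, bind₂_C_right, eval₂Hom_X', map_mul, map_sub, eval₂Hom_C, map_one, map_sum, map_pow,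
      bind₂_X_right, AlgHom.toRingHom_eq_coe, RingHom.coe_coe, algHom_C, rename_X]
    ring

lemma plethSub_plethLift (k : ℕ) (F : V 0) :
    plethSub k (plethLift (k+1) F) = rename Fin.castSucc (plethLift k F) := by
  obtain ⟨s, rfl⟩ := C_surjective (Fin 0) F
  rw [plethLift_C, plethLift_C, ← RingHom.comp_apply, plethSub_comp_plethLiftC]
  rfl

lemma rename_plethLiftC (k : ℕ) (σ : Equiv.Perm (Fin k)) (s : SF) :
    rename σ (plethLiftC k s) = plethLiftC k s := by
  suffices h : (rename σ).toRingHom.comp (plethLiftC k) = plethLiftC k from RingHom.congr_fun h s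
  refine ringHom_ext (fun a => ?_) (fun r => ?_)
  · simp [plethLiftC_C]
  · simp [plethLiftC_X, qV, Equiv.sum_comp σ (fun i => (X i : V k) ^ (r : ℕ))]

lemma swapVar_plethLift (k i : ℕ) (F : V 0) : swapVar k i (plethLift k F) = plethLift k F := by
  obtain ⟨s, rfl⟩ := C_surjective (Fin 0) F
  unfold swapVar
  split
  · rw [plethLift_C, rename_plethLiftC]
  · rfl

lemma swapVar_mul (k i : ℕ) (P Q : V k) :
    swapVar k i (P * Q) = swapVar k i P * swapVar k i Q := by
  unfold swapVar
  split
  · exact map_mul _ _ _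
  · rfl

lemma Y_succ_sub_Y_ne_zero {k i : ℕ} (h1 : 1 ≤ i) (h2 : i + 1 ≤ k) : Y k (i+1) - Y k i ≠ 0 := by
  rw [Y, Y, dif_pos (by omega), dif_pos (by omega), sub_ne_zero, Ne, X_inj, Fin.mk.injEq]
  omega

lemma T_mul_of_swapVar_eq {T : ∀ k : ℕ, ℕ → V k → V k} (hT : Trel T) {k i : ℕ}
    (h1 : 1 ≤ i) (h2 : i + 1 ≤ k) (P : V k) {S : V k} (hS : swapVar k i S = S) :
    T k i (P * S) = T k i P * S := by
  apply mul_left_cancel₀ (Y_succ_sub_Y_ne_zero h1 h2)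
  rw [hT k i h1 h2, swapVar_mul, hS]
  linear_combination (-S) * hT k i h1 h2 P

lemma Tchain_mul_of_swapVar_eq {T : ∀ k : ℕ, ℕ → V k → V k} (hT : Trel T) {m : ℕ} {S : V m}
    (hS : ∀ i, swapVar m i S = S) {n : ℕ} (hn : n + 1 ≤ m) (P : V m) :
    Tchain T m n (P * S) = Tchain T m n P * S := by
  induction n generalizing P with
  | zero => rfl
  | succ n ih =>
    simp only [Tchain]
    rw [T_mul_of_swapVar_eq hT (by omega) hn P (hS _), ih (by omega)]

lemma dPlus_mul_plethLift {T : ∀ k : ℕ, ℕ → V k → V k} (hT : Trel T) (k : ℕ) (A : V k)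
    (F : V 0) : dPlus T k (A * plethLift k F) = dPlus T k A * plethLift (k+1) F := by
  rw [dPlus, map_mul, raiseAdd_plethLift,
    Tchain_mul_of_swapVar_eq hT (fun i => swapVar_plethLift (k+1) i F) le_rfl, dPlus]

lemma toPolyLast_rename_castSucc (k : ℕ) (G : V k) :
    toPolyLast k (rename Fin.castSucc G) = Polynomial.C G := by
  suffices h : (toPolyLast k : V (k+1) →ₐ[SF] _).comp (rename Fin.castSucc) = Polynomial.CAlgHom
    from DFunLike.congr_fun h G
  refine algHom_ext fun i => ?_
  simp [toPolyLast, optionEquivLeft_X_some]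

lemma Polynomial.sum_mul_C {R : Type*} [CommSemiring R] {f : ℕ → R → R}
    (hf : ∀ n a b, f n (a * b) = f n a * b) (P : Polynomial R) (b : R) :
    (P * Polynomial.C b).sum f = P.sum f * b := by
  rw [mul_comm, ← Polynomial.smul_eq_C_mul,
    Polynomial.sum_smul_index _ _ _ fun n => by simpa using hf n 0 0]
  simp only [Polynomial.sum_def, Finset.sum_mul, mul_comm b, hf]

lemma dMinus_mul_of_plethSub_eq (k : ℕ) (A : V (k+1)) {B : V (k+1)} {G : V k}
    (hB : plethSub k B = rename Fin.castSucc G) : dMinus k (A * B) = dMinus k A * G := by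
  rw [dMinus, map_mul, hB, map_mul, toPolyLast_rename_castSucc,
    Polynomial.sum_mul_C fun n a b => by ring, dMinus]

lemma dMinus_mul_plethLift (k : ℕ) (A : V (k+1)) (F : V 0) :
    dMinus k (A * plethLift (k+1) F) = dMinus k A * plethLift k F :=
  dMinus_mul_of_plethSub_eq k A (plethSub_plethLift k F)

lemma phi_mul_plethLift {T : ∀ k : ℕ, ℕ → V k → V k} (hT : Trel T) (k : ℕ) (A : V (k+1))
    (F : V 0) : phi T k (A * plethLift (k+1) F) = phi T k A * plethLift (k+1) F := by
  rw [phi, dPlus_mul_plethLift hT, dMinus_mul_plethLift, dMinus_mul_plethLift,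
    dPlus_mul_plethLift hT, ← sub_mul, ← smul_mul_assoc, phi]

def mulPlethLift (F : V 0) (x : Σ k : ℕ, V k) : Σ k : ℕ, V k := ⟨x.1, x.2 * plethLift x.1 F⟩

lemma stepApply_mulPlethLift {T : ∀ k : ℕ, ℕ → V k → V k} (hT : Trel T) (s : PStep) (F : V 0)
    (x : Σ k : ℕ, V k) : stepApply T s (mulPlethLift F x) = mulPlethLift F (stepApply T s x) := by
  obtain ⟨k, A⟩ := x
  cases s with
  | east => simp only [mulPlethLift, stepApply, dPlus_mul_plethLift hT]; rfl
  | north =>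
    cases k with
    | zero =>
      change (⟨0, 0⟩ : Σ k, V k) = ⟨0, 0 * plethLift 0 F⟩
      rw [zero_mul]
    | succ k => simp only [mulPlethLift, stepApply, dMinus', dMinus_mul_plethLift]; rfl
  | diag =>
    cases k with
    | zero => rfl
    | succ k => simp only [mulPlethLift, stepApply, phi', phi_mul_plethLift hT]; rfl

lemma pathRun_eq_mulPlethLift {T : ∀ k : ℕ, ℕ → V k → V k} (hT : Trel T) (w : List PStep)
    (F : V 0) : pathRun T w F = mulPlethLift F (pathRun T w 1) := by
  induction w with
  | nil =>
    change (⟨0, F⟩ : Σ k, V k) = ⟨0, 1 * plethLift 0 F⟩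
    rw [plethLift_zero_apply, one_mul]
  | cons s w ih =>
    simp only [pathRun, List.foldr_cons] at ih ⊢
    rw [ih, stepApply_mulPlethLift hT]

def degZeroPart (x : Σ k : ℕ, V k) : V 0 :=
  if h : x.1 = 0 then cast (congrArg V h) x.2 else 0

lemma degZeroPart_mulPlethLift (F : V 0) (x : Σ k : ℕ, V k) :
    degZeroPart (mulPlethLift F x) = degZeroPart x * F := by
  obtain ⟨_ | k, A⟩ := x
  · exact congrArg (A * ·) (plethLift_zero_apply F)
  · simp [degZeroPart, mulPlethLift]

lemma dPath_eq_dPath_one_mul {T : ∀ k : ℕ, ℕ → V k → V k} (hT : Trel T) (w : List PStep)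
    (F : V 0) : dPath T w F = dPath T w 1 * F := by
  change degZeroPart _ = degZeroPart _ * F
  rw [pathRun_eq_mulPlethLift hT w F, degZeroPart_mulPlethLift]

theorem dPath_comm_general (T : ∀ k : ℕ, ℕ → V k → V k) (hT : Trel T)
    (w₁ w₂ : List PStep) :
    ∀ F : V 0, dPath T w₁ (dPath T w₂ F) = dPath T w₂ (dPath T w₁ F) := by
  intro F
  rw [dPath_eq_dPath_one_mul hT w₁ (dPath T w₂ F), dPath_eq_dPath_one_mul hT w₂ (dPath T w₁ F),
    dPath_eq_dPath_one_mul hT w₂ F, dPath_eq_dPath_one_mul hT w₁ F]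
  ring

/-- For any two paths `P, Q ∈ 𝒫` (encoded by the words `w₁, w₂`), the
path operators commute: `d_P ∘ d_Q = d_Q ∘ d_P` as operators `Λ → Λ`. -/
theorem dPath_comm (T : ∀ k : ℕ, ℕ → V k → V k) (hT : Trel T)
    (w₁ w₂ : List PStep) (h₁ : IsPath w₁) (h₂ : IsPath w₂) :
    ∀ F : V 0, dPath T w₁ (dPath T w₂ F) = dPath T w₂ (dPath T w₁ F) :=
  dPath_comm_general T hT w₁ w₂

end
end
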